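/- Let p ∈ [2,∞) and δ ∈ [0,1]. There exist constants c₁, c₂ > 0 depending only on p such that for all measurable symmetric-matrix-valued functions G, H on Ω with ‖G‖_p, ‖H‖_p < ∞: ‖G−H‖_p^p ≤ c₁·‖F∘G − F∘H‖₂² and ‖F∘G − F∘H‖₂² ≤ c₂·(K + ‖G‖_p + ‖G−H‖_p)^{p−2}·‖G−H‖_p², where K = δ·|Ω|^{1/p}. -/

import Mathlib

/-!
Write `F a = (δ + ‖a‖) ^ r • a` with `r = (p - 2) / 2` on a real inner product space, so that
`Fmap p δ` is `F` on symmetric matrices. Expanding `⟪F a - F b, a - b⟫` shows it is at least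
`(‖a - b‖ / 2) ^ r * ‖a - b‖ ^ 2 / 2`, and Cauchy–Schwarz turns this into
`(‖a - b‖ / 2) ^ (p / 2) ≤ ‖F a - F b‖`; integrating gives the first inequality with `c₁ = 2 ^ p`.
Conversely, `F a - F b = φ ‖a‖ • (a - b) + (φ ‖a‖ - φ ‖b‖) • b` with `φ t = (δ + t) ^ r` gives
`‖F a - F b‖ ≤ c (δ + ‖a‖ + ‖b‖) ^ r ‖a - b‖`. Hölder with exponents `p / (p - 2)` and `p / 2`
bounds the integral of `(δ + |G| + |H|) ^ (p - 2) |G - H| ^ 2` by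
`‖δ + |G| + |H|‖ₚ ^ (p - 2) ‖G - H‖ₚ ^ 2`, and Minkowski together with `|H| ≤ |G| + |G - H|`
gives `‖δ + |G| + |H|‖ₚ ≤ 2 (K + ‖G‖ₚ + ‖G - H‖ₚ)`.
-/

open Matrix

/-- Symmetric part `P^sym = (P + Pᵀ)/2` of a square matrix. -/
noncomputable def msym {d : ℕ} (P : Matrix (Fin d) (Fin d) ℝ) : Matrix (Fin d) (Fin d) ℝ :=
  (2⁻¹ : ℝ) • (P + Pᵀ)

/-- Frobenius inner product `A:B = ∑ᵢⱼ Aᵢⱼ Bᵢⱼ`. -/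
noncomputable def mdot {d : ℕ} (A B : Matrix (Fin d) (Fin d) ℝ) : ℝ :=
  ∑ i, ∑ j, A i j * B i j

/-- Frobenius norm `|A| = (A:A)^(1/2)`. -/
noncomputable def mnorm {d : ℕ} (A : Matrix (Fin d) (Fin d) ℝ) : ℝ :=
  Real.sqrt (mdot A A)

/-- Stress tensor `S(P) = (δ + |P^sym|)^(p-2) • P^sym` (real power, `0^r = 0` for `r < 0`). -/
noncomputable def Smap (p δ : ℝ) {d : ℕ} (P : Matrix (Fin d) (Fin d) ℝ) :
    Matrix (Fin d) (Fin d) ℝ :=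
  ((δ + mnorm (msym P)) ^ (p - 2)) • msym P

/-- Associated function `F(P) = (δ + |P^sym|)^((p-2)/2) • P^sym`. -/
noncomputable def Fmap (p δ : ℝ) {d : ℕ} (P : Matrix (Fin d) (Fin d) ℝ) :
    Matrix (Fin d) (Fin d) ℝ :=
  ((δ + mnorm (msym P)) ^ ((p - 2) / 2)) • msym P

open MeasureTheory

open Real
open scoped ENNReal

lemma rpow_sub_rpow_mul_le {r x y : ℝ} (hy : 0 ≤ y) (hyx : y ≤ x) :
    (x ^ r - y ^ r) * x ≤ max r 1 * x ^ r * (x - y) := by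
  rcases hy.eq_or_lt with rfl | hy
  · have hxr : 0 ≤ x ^ r * x := mul_nonneg (rpow_nonneg hyx r) hyx
    nlinarith [rpow_nonneg le_rfl r, mul_nonneg (sub_nonneg.2 (le_max_right r 1)) hxr]
  have hx : 0 < x := hy.trans_le hyx
  rcases le_total r 1 with hr1 | hr1
  · -- concavity: `x ^ r * y ≤ x * y ^ r`, since `y ^ (1 - r) ≤ x ^ (1 - r)`
    have key : x ^ r * y ≤ x * y ^ r := by
      have h := rpow_le_rpow hy.le hyx (sub_nonneg.2 hr1)
      calc x ^ r * y = x ^ r * (y ^ (1 - r) * y ^ r) := by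
            rw [← rpow_add hy]; norm_num
        _ ≤ x ^ r * (x ^ (1 - r) * y ^ r) := by gcongr
        _ = x * y ^ r := by rw [← mul_assoc, ← rpow_add hx]; norm_num
    rw [max_eq_right hr1]
    nlinarith
  · -- Bernoulli: `1 + r * (y / x - 1) ≤ (y / x) ^ r`
    have hb := one_add_mul_self_le_rpow_one_add (by linarith [div_nonneg hy.le hx.le] :
      -1 ≤ y / x - 1) hr1
    rw [add_sub_cancel, div_rpow hy.le hx.le, le_div_iff₀ (rpow_pos_of_pos hx r)] at hb
    rw [max_eq_left hr1]
    have : (1 + r * (y / x - 1)) * x ^ r * x = x ^ r * x + r * x ^ r * (y - x) := by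
      field_simp
    nlinarith

lemma rpow_sub_two_mul_rpow_two_le {p x y : ℝ} (hp : 2 ≤ p) (hy : 0 ≤ y) (hyx : y ≤ x) :
    x ^ (p - 2) * y ^ (2:ℝ) ≤ x ^ p := by
  have hx : 0 ≤ x := hy.trans hyx
  calc x ^ (p - 2) * y ^ (2:ℝ) ≤ x ^ (p - 2) * x ^ (2:ℝ) := by gcongr
    _ = x ^ p := by rw [← rpow_add' hx (by linarith)]; ring_nf

section ShiftedRpowSMul

variable {V : Type*} [NormedAddCommGroup V] [InnerProductSpace ℝ V]

noncomputable def shiftedRpowSMul (r δ : ℝ) (a : V) : V := (δ + ‖a‖) ^ r • a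

lemma continuous_shiftedRpowSMul {r : ℝ} (hr : 0 ≤ r) (δ : ℝ) :
    Continuous (shiftedRpowSMul (V := V) r δ) :=
  ((continuous_const.add continuous_norm).rpow_const fun _ => Or.inr hr).smul continuous_id

lemma two_mul_inner_smul_sub_smul_sub (c d : ℝ) (a b : V) :
    2 * inner ℝ (c • a - d • b) (a - b)
      = (c + d) * ‖a - b‖ ^ 2 + (c - d) * (‖a‖ ^ 2 - ‖b‖ ^ 2) := by
  simp only [inner_sub_left, inner_sub_right, real_inner_smul_left, real_inner_self_eq_norm_sq,
    real_inner_comm a b, norm_sub_sq_real]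
  ring

variable {r δ : ℝ}

lemma le_inner_shiftedRpowSMul_sub (hr : 0 ≤ r) (hδ : 0 ≤ δ) (a b : V) :
    (‖a - b‖ / 2) ^ r * ‖a - b‖ ^ 2 / 2
      ≤ inner ℝ (shiftedRpowSMul r δ a - shiftedRpowSMul r δ b) (a - b) := by
  have hid := two_mul_inner_smul_sub_smul_sub ((δ + ‖a‖) ^ r) ((δ + ‖b‖) ^ r) a b
  have hmono : 0 ≤ ((δ + ‖a‖) ^ r - (δ + ‖b‖) ^ r) * (‖a‖ ^ 2 - ‖b‖ ^ 2) := by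
    rcases le_total ‖a‖ ‖b‖ with h | h
    · refine mul_nonneg_of_nonpos_of_nonpos (sub_nonpos.2 ?_) (sub_nonpos.2 ?_) <;> gcongr
    · refine mul_nonneg (sub_nonneg.2 ?_) (sub_nonneg.2 ?_) <;> gcongr
  -- one of `‖a‖`, `‖b‖` is at least `‖a - b‖ / 2`
  have hhalf : (‖a - b‖ / 2) ^ r ≤ (δ + ‖a‖) ^ r + (δ + ‖b‖) ^ r := by
    have := norm_sub_le a b
    rcases le_total ‖a‖ ‖b‖ with h | h
    · have : (‖a - b‖ / 2) ^ r ≤ (δ + ‖b‖) ^ r := by gcongr; linarith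
      linarith [rpow_nonneg (by positivity : 0 ≤ δ + ‖a‖) r]
    · have : (‖a - b‖ / 2) ^ r ≤ (δ + ‖a‖) ^ r := by gcongr; linarith
      linarith [rpow_nonneg (by positivity : 0 ≤ δ + ‖b‖) r]
  rw [shiftedRpowSMul, shiftedRpowSMul]
  nlinarith [sq_nonneg ‖a - b‖]

lemma div_two_rpow_le_norm_shiftedRpowSMul_sub (hr : 0 ≤ r) (hδ : 0 ≤ δ) (a b : V) :
    (‖a - b‖ / 2) ^ (r + 1) ≤ ‖shiftedRpowSMul r δ a - shiftedRpowSMul r δ b‖ := by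
  rcases (norm_nonneg (a - b)).eq_or_lt with h | h
  · rw [← h, zero_div, zero_rpow (by linarith)]
    exact norm_nonneg _
  refine le_of_mul_le_mul_right ?_ h
  calc (‖a - b‖ / 2) ^ (r + 1) * ‖a - b‖ = (‖a - b‖ / 2) ^ r * ‖a - b‖ ^ 2 / 2 := by
        rw [rpow_add_one (by positivity)]; ring
    _ ≤ inner ℝ (shiftedRpowSMul r δ a - shiftedRpowSMul r δ b) (a - b) :=
        le_inner_shiftedRpowSMul_sub hr hδ a b
    _ ≤ _ := real_inner_le_norm _ _

lemma norm_shiftedRpowSMul_sub_le_of_norm_le (hr : 0 ≤ r) (hδ : 0 ≤ δ) {a b : V}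
    (hba : ‖b‖ ≤ ‖a‖) :
    ‖shiftedRpowSMul r δ a - shiftedRpowSMul r δ b‖
      ≤ (1 + max r 1) * (δ + ‖a‖ + ‖b‖) ^ r * ‖a - b‖ := by
  set x := δ + ‖a‖
  set y := δ + ‖b‖
  have hy : 0 ≤ y := by positivity
  have hyx : y ≤ x := by simp only [x, y]; linarith
  have hdiff : x - y ≤ ‖a - b‖ := by simpa [x, y] using norm_sub_norm_le a b
  have hsplit : shiftedRpowSMul r δ a - shiftedRpowSMul r δ b
      = x ^ r • (a - b) + (x ^ r - y ^ r) • b := by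
    simp only [shiftedRpowSMul, smul_sub, sub_smul]; abel
  have hmv : (x ^ r - y ^ r) * ‖b‖ ≤ max r 1 * x ^ r * ‖a - b‖ := by
    have hxy : 0 ≤ x ^ r - y ^ r := sub_nonneg.2 (by gcongr)
    calc (x ^ r - y ^ r) * ‖b‖ ≤ (x ^ r - y ^ r) * x := by gcongr; simp only [x]; linarith
      _ ≤ max r 1 * x ^ r * (x - y) := rpow_sub_rpow_mul_le hy hyx
      _ ≤ max r 1 * x ^ r * ‖a - b‖ := by gcongr
  rw [hsplit]
  calc ‖x ^ r • (a - b) + (x ^ r - y ^ r) • b‖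
      ≤ x ^ r * ‖a - b‖ + (x ^ r - y ^ r) * ‖b‖ := by
        refine (norm_add_le _ _).trans_eq ?_
        rw [norm_smul, norm_smul, Real.norm_of_nonneg (rpow_nonneg (hy.trans hyx) r),
          Real.norm_of_nonneg (sub_nonneg.2 (by gcongr))]
    _ ≤ (1 + max r 1) * x ^ r * ‖a - b‖ := by linarith
    _ ≤ (1 + max r 1) * (δ + ‖a‖ + ‖b‖) ^ r * ‖a - b‖ := by
        gcongr; exact le_add_of_nonneg_right (norm_nonneg b)

lemma norm_shiftedRpowSMul_sub_le (hr : 0 ≤ r) (hδ : 0 ≤ δ) (a b : V) :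
    ‖shiftedRpowSMul r δ a - shiftedRpowSMul r δ b‖
      ≤ (1 + max r 1) * (δ + ‖a‖ + ‖b‖) ^ r * ‖a - b‖ := by
  rcases le_total ‖b‖ ‖a‖ with h | h
  · exact norm_shiftedRpowSMul_sub_le_of_norm_le hr hδ h
  · rw [norm_sub_rev, norm_sub_rev a, add_right_comm]
    exact norm_shiftedRpowSMul_sub_le_of_norm_le hr hδ h

variable {p : ℝ}

lemma norm_sub_rpow_le_two_rpow_mul_norm_shiftedRpowSMul_sub (hp : 2 ≤ p) (hδ : 0 ≤ δ)
    (a b : V) :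
    ‖a - b‖ ^ p ≤ 2 ^ p
      * ‖shiftedRpowSMul ((p - 2) / 2) δ a - shiftedRpowSMul ((p - 2) / 2) δ b‖ ^ (2:ℝ) := by
  have h := div_two_rpow_le_norm_shiftedRpowSMul_sub (by linarith : 0 ≤ (p - 2) / 2) hδ a b
  calc ‖a - b‖ ^ p = 2 ^ p * (‖a - b‖ / 2) ^ p := by
        rw [div_rpow (norm_nonneg _) zero_le_two, mul_div_cancel₀ _ (by positivity)]
    _ = 2 ^ p * ((‖a - b‖ / 2) ^ ((p - 2) / 2 + 1)) ^ (2:ℝ) := by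
        rw [← rpow_mul (by positivity)]; ring_nf
    _ ≤ _ := by gcongr

lemma norm_shiftedRpowSMul_sub_rpow_two_le (hp : 2 ≤ p) (hδ : 0 ≤ δ) (a b : V) :
    ‖shiftedRpowSMul ((p - 2) / 2) δ a - shiftedRpowSMul ((p - 2) / 2) δ b‖ ^ (2:ℝ)
      ≤ (1 + max ((p - 2) / 2) 1) ^ 2 * ((δ + ‖a‖ + ‖b‖) ^ (p - 2) * ‖a - b‖ ^ (2:ℝ)) := by
  have h := norm_shiftedRpowSMul_sub_le (by linarith : 0 ≤ (p - 2) / 2) hδ a b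
  have hsq : ((δ + ‖a‖ + ‖b‖) ^ ((p - 2) / 2)) ^ 2 = (δ + ‖a‖ + ‖b‖) ^ (p - 2) := by
    rw [← rpow_natCast, ← rpow_mul (by positivity)]; ring_nf
  rw [rpow_two, rpow_two, ← hsq]
  calc _ ≤ ((1 + max ((p - 2) / 2) 1) * (δ + ‖a‖ + ‖b‖) ^ ((p - 2) / 2) * ‖a - b‖) ^ 2 := by
        gcongr
    _ = _ := by ring

end ShiftedRpowSMul

section Integral

variable {α : Type*} [MeasurableSpace α] {μ : Measure α} {E : Type*} [NormedAddCommGroup E]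
  {p δ : ℝ} {u v : α → E}

lemma MeasureTheory.MemLp.integral_norm_rpow_rpow_one_div_eq_toReal_eLpNorm {f : α → E}
    (hp : 0 < p) (hf : MemLp f (ENNReal.ofReal p) μ) :
    (∫ x, ‖f x‖ ^ p ∂μ) ^ (1 / p) = (eLpNorm f (ENNReal.ofReal p) μ).toReal := by
  rw [hf.eLpNorm_eq_integral_rpow_norm (by simpa using hp) ENNReal.ofReal_ne_top,
    ENNReal.toReal_ofReal hp.le, ENNReal.toReal_ofReal (by positivity), one_div]

lemma MeasureTheory.MemLp.rpow_of_nonneg {f : α → ℝ} (hf0 : ∀ x, 0 ≤ f x)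
    (hf : MemLp f (ENNReal.ofReal p) μ) {q : ℝ} (hq : 0 < q) :
    MemLp (fun x => f x ^ q) (ENNReal.ofReal (p / q)) μ := by
  have h := hf.norm_rpow_div (ENNReal.ofReal q)
  rw [← ENNReal.ofReal_div_of_pos hq, ENNReal.toReal_ofReal hq.le] at h
  simpa only [Real.norm_of_nonneg (hf0 _)] using h

lemma MeasureTheory.MemLp.integrable_norm_rpow_ofReal [IsFiniteMeasure μ] {f : α → E}
    (hp : 0 ≤ p) (hf : MemLp f (ENNReal.ofReal p) μ) :
    Integrable (fun x => ‖f x‖ ^ p) μ := by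
  simpa [ENNReal.toReal_ofReal hp] using hf.integrable_norm_rpow'

/-- Hölder's inequality with the exponents `p / (p - 2)` and `p / 2`. -/
lemma integral_rpow_sub_two_mul_rpow_two_le (hp : 2 ≤ p) {f g : α → ℝ} (hf0 : ∀ x, 0 ≤ f x)
    (hg0 : ∀ x, 0 ≤ g x) (hf : MemLp f (ENNReal.ofReal p) μ) (hg : MemLp g (ENNReal.ofReal p) μ) :
    ∫ x, f x ^ (p - 2) * g x ^ (2:ℝ) ∂μ
      ≤ ((∫ x, f x ^ p ∂μ) ^ (1 / p)) ^ (p - 2) * ((∫ x, g x ^ p ∂μ) ^ (1 / p)) ^ (2:ℝ) := by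
  have hg2 : ∫ x, g x ^ (2:ℝ) ∂μ = ((∫ x, g x ^ (2:ℝ) ∂μ) ^ (1 / 2 : ℝ)) ^ (2:ℝ) := by
    rw [← rpow_mul (integral_nonneg fun x => rpow_nonneg (hg0 x) _)]; norm_num
  rcases hp.eq_or_lt with rfl | hp
  · simpa using hg2.le
  have hconj : (p / (p - 2)).HolderConjugate (p / 2) := by
    rw [Real.holderConjugate_iff]
    refine ⟨by rw [lt_div_iff₀ (by linarith)]; linarith, ?_⟩
    field_simp
    ring
  have hpow (h : α → ℝ) (h0 : ∀ x, 0 ≤ h x) (q : ℝ) (hq : 0 < q) :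
      (fun x => (h x ^ q) ^ (p / q)) = fun x => h x ^ p := by
    ext x; rw [← rpow_mul (h0 x), mul_div_cancel₀ _ hq.ne']
  have H := integral_mul_le_Lp_mul_Lq_of_nonneg hconj
    (.of_forall fun x => rpow_nonneg (hf0 x) _) (.of_forall fun x => rpow_nonneg (hg0 x) _)
    (hf.rpow_of_nonneg hf0 (by linarith))
    (hg.rpow_of_nonneg hg0 two_pos)
  rw [hpow f hf0 _ (by linarith), hpow g hg0 _ two_pos] at H
  convert H using 2
  · rw [← rpow_mul (integral_nonneg fun x => rpow_nonneg (hf0 x) _)]; field_simp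
  · rw [← rpow_mul (integral_nonneg fun x => rpow_nonneg (hg0 x) _)]; field_simp

lemma eLpNorm_add_norm_add_norm_le {q : ℝ≥0∞} (hq : 1 ≤ q) (hδ : 0 ≤ δ)
    (hu : AEStronglyMeasurable u μ) (hv : AEStronglyMeasurable v μ) :
    eLpNorm (fun x => δ + ‖u x‖ + ‖v x‖) q μ
      ≤ eLpNorm (fun _ => δ) q μ + 2 * eLpNorm u q μ + eLpNorm (u - v) q μ := by
  have hmaj (x : α) : ‖δ + ‖u x‖ + ‖v x‖‖ ≤ δ + 2 * ‖u x‖ + ‖u x - v x‖ := by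
    rw [Real.norm_of_nonneg (by positivity)]
    linarith [norm_le_norm_add_norm_sub (u x) (v x)]
  calc _ ≤ eLpNorm (fun x => δ + 2 * ‖u x‖ + ‖u x - v x‖) q μ := eLpNorm_mono_real hmaj
    _ ≤ eLpNorm (fun _ => δ) q μ + eLpNorm ((2:ℝ) • fun x => ‖u x‖) q μ
          + eLpNorm (fun x => ‖(u - v) x‖) q μ := by
      have hsum : (fun x => δ + 2 * ‖u x‖ + ‖u x - v x‖)
          = (fun _ => δ) + ((2:ℝ) • fun x => ‖u x‖) + fun x => ‖(u - v) x‖ := rfl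
      rw [hsum]
      refine (eLpNorm_add_le (by fun_prop) (by fun_prop) hq).trans ?_
      gcongr
      exact eLpNorm_add_le (by fun_prop) (by fun_prop) hq
    _ = _ := by
      rw [eLpNorm_const_smul, eLpNorm_norm, eLpNorm_norm, Real.enorm_of_nonneg zero_le_two]
      simp

lemma integral_add_norm_add_norm_rpow_rpow_one_div_le [IsFiniteMeasure μ] (hp : 1 ≤ p)
    (hδ : 0 ≤ δ) (hu : MemLp u (ENNReal.ofReal p) μ) (hv : MemLp v (ENNReal.ofReal p) μ) :
    (∫ x, (δ + ‖u x‖ + ‖v x‖) ^ p ∂μ) ^ (1 / p)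
      ≤ 2 * (δ * μ.real Set.univ ^ (1 / p) + (∫ x, ‖u x‖ ^ p ∂μ) ^ (1 / p)
          + (∫ x, ‖u x - v x‖ ^ p ∂μ) ^ (1 / p)) := by
  have hδP : eLpNorm (fun _ => δ) (ENNReal.ofReal p) μ
      = ENNReal.ofReal (δ * μ.real Set.univ ^ (1 / p)) := by
    rw [eLpNorm_const' δ (by simp; linarith) ENNReal.ofReal_ne_top,
      ENNReal.toReal_ofReal (by linarith), ENNReal.ofReal_mul hδ,
      ← ENNReal.ofReal_rpow_of_nonneg measureReal_nonneg (by positivity), measureReal_def,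
      ENNReal.ofReal_toReal (measure_ne_top μ _), Real.enorm_of_nonneg hδ]
  have hM : MemLp (fun x => δ + ‖u x‖ + ‖v x‖) (ENNReal.ofReal p) μ :=
    ((memLp_const δ).add hu.norm).add hv.norm
  have hMeq := hM.integral_norm_rpow_rpow_one_div_eq_toReal_eLpNorm (by linarith)
  have huv := (hu.sub hv).integral_norm_rpow_rpow_one_div_eq_toReal_eLpNorm (by linarith)
  simp only [Real.norm_of_nonneg (by positivity : 0 ≤ δ + ‖u _‖ + ‖v _‖)] at hMeq
  simp only [Pi.sub_apply] at huv
  rw [hMeq, hu.integral_norm_rpow_rpow_one_div_eq_toReal_eLpNorm (by linarith), huv]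
  have hδfin : eLpNorm (fun _ => δ) (ENNReal.ofReal p) μ ≠ ⊤ := by simp [hδP]
  have h2ufin : 2 * eLpNorm u (ENNReal.ofReal p) μ ≠ ⊤ :=
    ENNReal.mul_ne_top (by simp) hu.eLpNorm_ne_top
  have key := ENNReal.toReal_mono (by finiteness [(hu.sub hv).eLpNorm_ne_top])
    (eLpNorm_add_norm_add_norm_le (by simpa using hp) hδ hu.1 hv.1)
  rw [ENNReal.toReal_add (by finiteness) (hu.sub hv).eLpNorm_ne_top,
    ENNReal.toReal_add hδfin h2ufin, ENNReal.toReal_mul, ENNReal.toReal_ofNat, hδP,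
    ENNReal.toReal_ofReal (by positivity)] at key
  have : 0 ≤ δ * μ.real Set.univ ^ (1 / p) := by positivity
  linarith [ENNReal.toReal_nonneg (a := eLpNorm (u - v) (ENNReal.ofReal p) μ)]

lemma integrable_add_norm_add_norm_rpow_sub_two_mul [IsFiniteMeasure μ] (hp : 2 ≤ p)
    (hδ : 0 ≤ δ) (hu : MemLp u (ENNReal.ofReal p) μ) (hv : MemLp v (ENNReal.ofReal p) μ) :
    Integrable (fun x => (δ + ‖u x‖ + ‖v x‖) ^ (p - 2) * ‖u x - v x‖ ^ (2:ℝ)) μ := by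
  have hum := hu.1
  have hvm := hv.1
  have hM := (((memLp_const δ).add hu.norm).add hv.norm).integrable_norm_rpow_ofReal
    (by linarith : 0 ≤ p)
  simp only [Pi.add_apply, Real.norm_of_nonneg (by positivity : 0 ≤ δ + ‖u _‖ + ‖v _‖)] at hM
  refine hM.mono' (by fun_prop (disch := linarith)) (.of_forall fun x => ?_)
  rw [Real.norm_of_nonneg (by positivity)]
  exact rpow_sub_two_mul_rpow_two_le hp (norm_nonneg _)
    ((norm_sub_le _ _).trans (by linarith [norm_nonneg (u x)]))

end Integral

section Integrated

variable {α : Type*} [MeasurableSpace α] {μ : Measure α} [IsFiniteMeasure μ]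
  {V : Type*} [NormedAddCommGroup V] [InnerProductSpace ℝ V] {p δ : ℝ} {u v : α → V}

lemma integrable_norm_shiftedRpowSMul_sub_rpow_two (hp : 2 ≤ p) (hδ : 0 ≤ δ)
    (hu : MemLp u (ENNReal.ofReal p) μ) (hv : MemLp v (ENNReal.ofReal p) μ) :
    Integrable (fun x => ‖shiftedRpowSMul ((p - 2) / 2) δ (u x)
      - shiftedRpowSMul ((p - 2) / 2) δ (v x)‖ ^ (2:ℝ)) μ := by
  have hF := continuous_shiftedRpowSMul (V := V) (by linarith : 0 ≤ (p - 2) / 2) δ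
  have hFu := hF.comp_aestronglyMeasurable hu.1
  have hFv := hF.comp_aestronglyMeasurable hv.1
  refine ((integrable_add_norm_add_norm_rpow_sub_two_mul hp hδ hu hv).const_mul
    ((1 + max ((p - 2) / 2) 1) ^ 2)).mono' (by fun_prop (disch := norm_num))
    (.of_forall fun x => ?_)
  rw [Real.norm_of_nonneg (by positivity)]
  exact norm_shiftedRpowSMul_sub_rpow_two_le hp hδ _ _

theorem integral_norm_sub_rpow_le (hp : 2 ≤ p) (hδ : 0 ≤ δ)
    (hu : MemLp u (ENNReal.ofReal p) μ) (hv : MemLp v (ENNReal.ofReal p) μ) :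
    ∫ x, ‖u x - v x‖ ^ p ∂μ
      ≤ 2 ^ p * ∫ x, ‖shiftedRpowSMul ((p - 2) / 2) δ (u x)
          - shiftedRpowSMul ((p - 2) / 2) δ (v x)‖ ^ (2:ℝ) ∂μ := by
  rw [← integral_const_mul]
  exact integral_mono ((hu.sub hv).integrable_norm_rpow_ofReal (by linarith))
    ((integrable_norm_shiftedRpowSMul_sub_rpow_two hp hδ hu hv).const_mul _)
    fun x => norm_sub_rpow_le_two_rpow_mul_norm_shiftedRpowSMul_sub hp hδ _ _

theorem integral_norm_shiftedRpowSMul_sub_rpow_two_le (hp : 2 ≤ p) (hδ : 0 ≤ δ)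
    (hu : MemLp u (ENNReal.ofReal p) μ) (hv : MemLp v (ENNReal.ofReal p) μ) :
    ∫ x, ‖shiftedRpowSMul ((p - 2) / 2) δ (u x) - shiftedRpowSMul ((p - 2) / 2) δ (v x)‖ ^ (2:ℝ) ∂μ
      ≤ (1 + max ((p - 2) / 2) 1) ^ 2 * 2 ^ (p - 2)
        * (δ * μ.real Set.univ ^ (1 / p) + (∫ x, ‖u x‖ ^ p ∂μ) ^ (1 / p)
            + (∫ x, ‖u x - v x‖ ^ p ∂μ) ^ (1 / p)) ^ (p - 2)
        * ((∫ x, ‖u x - v x‖ ^ p ∂μ) ^ (1 / p)) ^ (2:ℝ) := by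
  set C := (1 + max ((p - 2) / 2) 1) ^ 2
  have hM : MemLp (fun x => δ + ‖u x‖ + ‖v x‖) (ENNReal.ofReal p) μ :=
    ((memLp_const δ).add hu.norm).add hv.norm
  calc _ ≤ ∫ x, C * ((δ + ‖u x‖ + ‖v x‖) ^ (p - 2) * ‖u x - v x‖ ^ (2:ℝ)) ∂μ :=
        integral_mono (integrable_norm_shiftedRpowSMul_sub_rpow_two hp hδ hu hv)
          ((integrable_add_norm_add_norm_rpow_sub_two_mul hp hδ hu hv).const_mul C)
          fun x => norm_shiftedRpowSMul_sub_rpow_two_le hp hδ _ _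
    _ = C * ∫ x, (δ + ‖u x‖ + ‖v x‖) ^ (p - 2) * ‖u x - v x‖ ^ (2:ℝ) ∂μ :=
        integral_const_mul _ _
    _ ≤ C * (((∫ x, (δ + ‖u x‖ + ‖v x‖) ^ p ∂μ) ^ (1 / p)) ^ (p - 2)
          * ((∫ x, ‖u x - v x‖ ^ p ∂μ) ^ (1 / p)) ^ (2:ℝ)) := by
        gcongr
        exact integral_rpow_sub_two_mul_rpow_two_le hp (fun x => by positivity)
          (fun x => norm_nonneg _) hM (hu.sub hv).norm
    _ ≤ C * ((2 * (δ * μ.real Set.univ ^ (1 / p) + (∫ x, ‖u x‖ ^ p ∂μ) ^ (1 / p)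
            + (∫ x, ‖u x - v x‖ ^ p ∂μ) ^ (1 / p))) ^ (p - 2)
          * ((∫ x, ‖u x - v x‖ ^ p ∂μ) ^ (1 / p)) ^ (2:ℝ)) := by
        gcongr
        exact integral_add_norm_add_norm_rpow_rpow_one_div_le (by linarith) hδ hu hv
    _ = _ := by rw [mul_rpow zero_le_two (by positivity)]; ring

end Integrated

section Matrix

variable {d : ℕ}

noncomputable def mvec (A : Matrix (Fin d) (Fin d) ℝ) : EuclideanSpace ℝ (Fin d × Fin d) :=
  WithLp.toLp 2 fun q => A q.1 q.2

lemma mvec_sub (A B : Matrix (Fin d) (Fin d) ℝ) : mvec (A - B) = mvec A - mvec B := rfl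

lemma mvec_smul (c : ℝ) (A : Matrix (Fin d) (Fin d) ℝ) : mvec (c • A) = c • mvec A := rfl

lemma mnorm_eq_norm_mvec (A : Matrix (Fin d) (Fin d) ℝ) : mnorm A = ‖mvec A‖ := by
  rw [EuclideanSpace.norm_eq, mnorm, mdot, Fintype.sum_prod_type]
  simp [mvec, sq]

lemma msym_eq_self_of_transpose_eq {P : Matrix (Fin d) (Fin d) ℝ} (h : Pᵀ = P) : msym P = P := by
  rw [msym, h, ← two_smul ℝ P, smul_smul, inv_mul_cancel₀ two_ne_zero, one_smul]

lemma mvec_Fmap_of_transpose_eq (p δ : ℝ) {P : Matrix (Fin d) (Fin d) ℝ} (h : Pᵀ = P) :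
    mvec (Fmap p δ P) = shiftedRpowSMul ((p - 2) / 2) δ (mvec P) := by
  rw [Fmap, msym_eq_self_of_transpose_eq h, mvec_smul, shiftedRpowSMul, mnorm_eq_norm_mvec]

lemma memLp_mvec_comp {α : Type*} [MeasurableSpace α] {μ : Measure α} {p : ℝ} (hp : 0 < p)
    {G : α → Matrix (Fin d) (Fin d) ℝ} (hG : ∀ i j, Measurable fun x => G x i j)
    (hGp : Integrable (fun x => mnorm (G x) ^ p) μ) :
    MemLp (fun x => mvec (G x)) (ENNReal.ofReal p) μ := by
  have hmeas : Measurable fun x => mvec (G x) :=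
    (WithLp.measurable_toLp 2 _).comp (measurable_pi_lambda _ fun q => hG q.1 q.2)
  refine (integrable_norm_rpow_iff hmeas.aestronglyMeasurable (by simpa using hp)
    ENNReal.ofReal_ne_top).1 ?_
  simpa [ENNReal.toReal_ofReal hp.le, mnorm_eq_norm_mvec] using hGp

end Matrix

theorem stmt13_general (p δ : ℝ) (hp : 2 ≤ p) (hδ0 : 0 ≤ δ) :
    ∃ c₁ : ℝ, 0 < c₁ ∧ ∃ c₂ : ℝ, 0 < c₂ ∧
      ∀ (d : ℕ) (Ω : Set (Fin d → ℝ)),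
        MeasurableSet Ω → Bornology.IsBounded Ω → 0 < volume Ω →
        ∀ G H : (Fin d → ℝ) → Matrix (Fin d) (Fin d) ℝ,
          (∀ i j, Measurable fun x => G x i j) →
          (∀ i j, Measurable fun x => H x i j) →
          (∀ x ∈ Ω, (G x)ᵀ = G x) → (∀ x ∈ Ω, (H x)ᵀ = H x) →
          IntegrableOn (fun x => mnorm (G x) ^ p) Ω volume →
          IntegrableOn (fun x => mnorm (H x) ^ p) Ω volume →
          ((∫ x in Ω, mnorm (G x - H x) ^ p) ^ ((1:ℝ)/p)) ^ p
            ≤ c₁ * ((∫ x in Ω, mnorm (Fmap p δ (G x) - Fmap p δ (H x)) ^ (2:ℝ))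
                      ^ ((1:ℝ)/2)) ^ (2:ℝ) ∧
          ((∫ x in Ω, mnorm (Fmap p δ (G x) - Fmap p δ (H x)) ^ (2:ℝ)) ^ ((1:ℝ)/2))
              ^ (2:ℝ)
            ≤ c₂ * (δ * (volume Ω).toReal ^ ((1:ℝ)/p)
                    + (∫ x in Ω, mnorm (G x) ^ p) ^ ((1:ℝ)/p)
                    + (∫ x in Ω, mnorm (G x - H x) ^ p) ^ ((1:ℝ)/p)) ^ (p - 2)
                * ((∫ x in Ω, mnorm (G x - H x) ^ p) ^ ((1:ℝ)/p)) ^ (2:ℝ) := by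
  refine ⟨2 ^ p, by positivity, (1 + max ((p - 2) / 2) 1) ^ 2 * 2 ^ (p - 2), by positivity, ?_⟩
  intro d Ω hΩ hΩb _ G H hG hH hGsymm hHsymm hGp hHp
  have : IsFiniteMeasure (volume.restrict Ω) := isFiniteMeasure_restrict.2 hΩb.measure_lt_top.ne
  have hu := memLp_mvec_comp (by linarith) hG hGp
  have hv := memLp_mvec_comp (by linarith) hH hHp
  have hF : ∫ x in Ω, mnorm (Fmap p δ (G x) - Fmap p δ (H x)) ^ (2:ℝ)
      = ∫ x in Ω, ‖shiftedRpowSMul ((p - 2) / 2) δ (mvec (G x))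
          - shiftedRpowSMul ((p - 2) / 2) δ (mvec (H x))‖ ^ (2:ℝ) :=
    setIntegral_congr_fun hΩ fun x hx => by
      rw [mnorm_eq_norm_mvec, mvec_sub, mvec_Fmap_of_transpose_eq p δ (hGsymm x hx),
        mvec_Fmap_of_transpose_eq p δ (hHsymm x hx)]
  have hpow (I q : ℝ) (hI : 0 ≤ I) (hq : q ≠ 0) : (I ^ (1 / q)) ^ q = I := by
    rw [← rpow_mul hI, one_div_mul_cancel hq, rpow_one]
  rw [hF]
  simp only [mnorm_eq_norm_mvec, mvec_sub]
  rw [hpow _ _ (integral_nonneg fun x => by positivity) (by linarith),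
    hpow _ _ (integral_nonneg fun x => by positivity) two_ne_zero,
    ← measureReal_def, ← measureReal_restrict_apply_univ]
  exact ⟨integral_norm_sub_rpow_le hp hδ0 hu hv,
    integral_norm_shiftedRpowSMul_sub_rpow_two_le hp hδ0 hu hv⟩

/-- Let `p ∈ [2,∞)` and `δ ∈ [0,1]`. There are constants `c₁, c₂ > 0` depending only on
`p` such that for every bounded measurable `Ω ⊂ ℝᵈ` of positive measure and all
measurable symmetric-matrix-valued `G, H ∈ Lᵖ(Ω)`:
`‖G - H‖ₚᵖ ≤ c₁ * ‖F∘G - F∘H‖₂²` and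
`‖F∘G - F∘H‖₂² ≤ c₂ * (K + ‖G‖ₚ + ‖G - H‖ₚ)^(p-2) * ‖G - H‖ₚ²`, where `K = δ * |Ω|^(1/p)`. -/
theorem stmt13 (p δ : ℝ) (hp : 2 ≤ p) (hδ0 : 0 ≤ δ) (hδ1 : δ ≤ 1) :
    ∃ c₁ : ℝ, 0 < c₁ ∧ ∃ c₂ : ℝ, 0 < c₂ ∧
      ∀ (d : ℕ) (Ω : Set (Fin d → ℝ)),
        MeasurableSet Ω → Bornology.IsBounded Ω → 0 < volume Ω →
        ∀ G H : (Fin d → ℝ) → Matrix (Fin d) (Fin d) ℝ,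
          (∀ i j, Measurable fun x => G x i j) →
          (∀ i j, Measurable fun x => H x i j) →
          (∀ x ∈ Ω, (G x)ᵀ = G x) → (∀ x ∈ Ω, (H x)ᵀ = H x) →
          IntegrableOn (fun x => mnorm (G x) ^ p) Ω volume →
          IntegrableOn (fun x => mnorm (H x) ^ p) Ω volume →
          ((∫ x in Ω, mnorm (G x - H x) ^ p) ^ ((1:ℝ)/p)) ^ p
            ≤ c₁ * ((∫ x in Ω, mnorm (Fmap p δ (G x) - Fmap p δ (H x)) ^ (2:ℝ))
                      ^ ((1:ℝ)/2)) ^ (2:ℝ) ∧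
          ((∫ x in Ω, mnorm (Fmap p δ (G x) - Fmap p δ (H x)) ^ (2:ℝ)) ^ ((1:ℝ)/2))
              ^ (2:ℝ)
            ≤ c₂ * (δ * (volume Ω).toReal ^ ((1:ℝ)/p)
                    + (∫ x in Ω, mnorm (G x) ^ p) ^ ((1:ℝ)/p)
                    + (∫ x in Ω, mnorm (G x - H x) ^ p) ^ ((1:ℝ)/p)) ^ (p - 2)
                * ((∫ x in Ω, mnorm (G x - H x) ^ p) ^ ((1:ℝ)/p)) ^ (2:ℝ) :=
  stmt13_general p δ hp hδ0
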